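/- arXiv:2306.12741 — 9 statements merged into one kernel-verified Lean document; each statement's English description precedes it below -/
import Mathlib

section
/- Let v₁,…,vₙ ∈ ℝ^d and let t be an integer with 0 ≤ t and n−2t ≥ 1. Then for every I ⊆ {1,…,n} with |I| = n−t, the centroid (1/(n−t))·∑_{i∈I} v_i lies in the convex hull of { (1/(n−2t))·∑_{i∈J} v_i : J ⊆ I, |J| = n−2t }; in particular, it lies in the convex hull of S₂. -/
open Finset

lemma card_filter_powersetCard_mem {α : Type*} [DecidableEq α] (s : Finset α) (k : ℕ)
    (hk : 1 ≤ k) {i : α} (hi : i ∈ s) :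
    ((s.powersetCard k).filter (fun J => i ∈ J)).card = (s.card - 1).choose (k - 1) := by
  rw [← Finset.card_erase_of_mem hi, ← Finset.card_powersetCard]
  refine Finset.card_bij' (fun J _ => J.erase i) (fun J _ => insert i J) ?_ ?_ ?_ ?_
  · intro J hJ
    simp only [mem_filter, mem_powersetCard] at hJ
    simp only [mem_powersetCard]
    exact ⟨erase_subset_erase i hJ.1.1, by rw [card_erase_of_mem hJ.2, hJ.1.2]⟩
  · intro J hJ
    simp only [mem_powersetCard] at hJ
    simp only [mem_filter, mem_powersetCard]
    have hiJ : i ∉ J := fun hx => (notMem_erase i s) (hJ.1 hx)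
    refine ⟨⟨insert_subset hi (hJ.1.trans (erase_subset i s)), ?_⟩, mem_insert_self i J⟩
    rw [card_insert_of_notMem hiJ, hJ.2]
    omega
  · intro J hJ
    simp only [mem_filter] at hJ
    exact insert_erase hJ.2
  · intro J hJ
    simp only [mem_powersetCard] at hJ
    exact erase_insert (fun hx => (notMem_erase i s) (hJ.1 hx))

lemma sum_powersetCard_sum {α M : Type*} [DecidableEq α] [AddCommMonoid M]
    (s : Finset α) (k : ℕ) (hk : 1 ≤ k) (f : α → M) :
    ∑ J ∈ s.powersetCard k, ∑ i ∈ J, f i = (s.card - 1).choose (k - 1) • ∑ i ∈ s, f i := by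
  have : ∀ J ∈ s.powersetCard k, ∑ i ∈ J, f i = ∑ i ∈ s, if i ∈ J then f i else 0 := by
    intro J hJ
    rw [Finset.sum_ite_mem, Finset.inter_eq_right.2 (mem_powersetCard.1 hJ).1]
  rw [Finset.sum_congr rfl this, Finset.sum_comm, Finset.smul_sum]
  refine Finset.sum_congr rfl fun i hi => ?_
  rw [← Finset.sum_filter, Finset.sum_const, card_filter_powersetCard_mem s k hk hi]

/-- Every centroid of an `(n-t)`-element subset `I` lies in the convex hull of the centroids
of the `(n-2t)`-element subsets of `I`; in particular, it lies in the convex hull of `S₂`,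
the set of centroids of all `(n-2t)`-element subsets. -/
theorem centroid_mem_convexHull_of_smaller_centroids (n d t : ℕ) (h : 1 ≤ n - 2 * t)
    (v : Fin n → EuclideanSpace ℝ (Fin d)) (I : Finset (Fin n)) (hI : I.card = n - t) :
    ((1 / ((n - t : ℕ) : ℝ)) • ∑ i ∈ I, v i ∈
      convexHull ℝ {x : EuclideanSpace ℝ (Fin d) |
        ∃ J : Finset (Fin n), J ⊆ I ∧ J.card = n - 2 * t ∧
          x = (1 / ((n - 2 * t : ℕ) : ℝ)) • ∑ i ∈ J, v i}) ∧
    ((1 / ((n - t : ℕ) : ℝ)) • ∑ i ∈ I, v i ∈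
      convexHull ℝ {x : EuclideanSpace ℝ (Fin d) |
        ∃ J : Finset (Fin n), J.card = n - 2 * t ∧
          x = (1 / ((n - 2 * t : ℕ) : ℝ)) • ∑ i ∈ J, v i}) := by
  set k := n - 2 * t with hkdef
  set m := n - t with hmdef
  have hm1 : 1 ≤ m := by omega
  have hkm : k ≤ m := by omega
  have hkI : k ≤ I.card := by omega
  set P := I.powersetCard k with hPdef
  have hPcard : P.card = m.choose k := by rw [hPdef, Finset.card_powersetCard, hI]
  have hcpos : 0 < m.choose k := Nat.choose_pos hkm
  have key : (1 / ((m : ℕ) : ℝ)) • ∑ i ∈ I, v i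
      = P.centerMass (fun _ => (1 : ℝ))
          (fun J => (1 / ((k : ℕ) : ℝ)) • ∑ i ∈ J, v i) := by
    rw [Finset.centerMass]
    simp only [one_smul, Finset.sum_const, nsmul_eq_mul, mul_one]
    rw [← Finset.smul_sum, sum_powersetCard_sum I k h v, hI,
      ← Nat.cast_smul_eq_nsmul ℝ, smul_smul, smul_smul]
    congr 1
    rw [hPcard]
    have h1 : m - 1 + 1 = m := by omega
    have h2 : k - 1 + 1 = k := by omega
    have hnat : m * (m - 1).choose (k - 1) = m.choose k * k := by
      have := Nat.add_one_mul_choose_eq (m - 1) (k - 1)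
      rwa [h1, h2] at this
    have hnatR : (m : ℝ) * ((m - 1).choose (k - 1) : ℝ) = (m.choose k : ℝ) * (k : ℝ) := by
      exact_mod_cast hnat
    have hmne : (m : ℝ) ≠ 0 := by exact_mod_cast Nat.one_le_iff_ne_zero.1 hm1
    have hkne : (k : ℝ) ≠ 0 := by exact_mod_cast Nat.one_le_iff_ne_zero.1 h
    have hcne : ((m.choose k : ℕ) : ℝ) ≠ 0 := by exact_mod_cast hcpos.ne'
    field_simp
    linarith [hnatR]
  have mem1 : (1 / ((m : ℕ) : ℝ)) • ∑ i ∈ I, v i ∈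
      convexHull ℝ {x : EuclideanSpace ℝ (Fin d) |
        ∃ J : Finset (Fin n), J ⊆ I ∧ J.card = k ∧
          x = (1 / ((k : ℕ) : ℝ)) • ∑ i ∈ J, v i} := by
    rw [key]
    refine Finset.centerMass_mem_convexHull P (fun _ _ => zero_le_one) ?_ ?_
    · simp only [Finset.sum_const, nsmul_eq_mul, mul_one]
      rw [hPcard]
      exact_mod_cast hcpos
    · intro J hJ
      obtain ⟨hsub, hcard⟩ := Finset.mem_powersetCard.1 hJ
      exact ⟨J, hsub, hcard, rfl⟩
  refine ⟨mem1, convexHull_mono ?_ mem1⟩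
  rintro x ⟨J, _, h2, h3⟩
  exact ⟨J, h2, h3⟩
end

section
/- Let v₁,…,vₙ ∈ ℝ^d and let t be an integer with 0 ≤ t and n−2t ≥ 1. Then diam(S₂) ≤ (2(n−t)/(n−2t)) · diam(S_Cent). In particular, if 7t < n, then diam(S₂) ≤ (14/5) · diam(S_Cent). -/
/-!
If `I, J` are `(n - 2t)`-subsets, then `∑_I v - ∑_J v = ∑_A v - ∑_B v` with `A = I \ J`,
`B = J \ I` disjoint, of equal size at most `2t`. Cut `A` and `B` into two pieces each, of size
at most `t`. For disjoint `P, Q` of equal size at most `t` there is an `(n - t)`-set `K ⊇ P`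
avoiding `Q`; swapping `P` for `Q` in `K` gives a second `(n - t)`-set whose centroid differs
from that of `K` by `(∑_P v - ∑_Q v) / (n - t)`. Hence each piece contributes at most
`(n - t) · diam S_Cent`, and dividing by `n - 2t` gives the bound.
-/

/-- The set of possible centroids: centroids of all `(n-t)`-element subsets of the `n` input
vectors. -/
def SCent (n d t : ℕ) (v : Fin n → EuclideanSpace ℝ (Fin d)) :
    Set (EuclideanSpace ℝ (Fin d)) :=
  {x | ∃ I : Finset (Fin n), I.card = n - t ∧ x = (1 / ((n - t : ℕ) : ℝ)) • ∑ i ∈ I, v i}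

/-- `S₂`: the set of centroids of all `(n-2t)`-element subsets of the `n` input vectors. -/
def S₂ (n d t : ℕ) (v : Fin n → EuclideanSpace ℝ (Fin d)) :
    Set (EuclideanSpace ℝ (Fin d)) :=
  {x | ∃ I : Finset (Fin n), I.card = n - 2 * t ∧
    x = (1 / ((n - 2 * t : ℕ) : ℝ)) • ∑ i ∈ I, v i}

open Finset Metric

def centroids {ι E : Type*} [AddCommGroup E] [Module ℝ E] (v : ι → E) (m : ℕ) : Set E :=
  {x | ∃ I : Finset ι, I.card = m ∧ x = (1 / (m : ℝ)) • ∑ i ∈ I, v i}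

section
variable {ι E : Type*} [SeminormedAddCommGroup E] [NormedSpace ℝ E] (v : ι → E)

theorem centroids_finite [Finite ι] (m : ℕ) : (centroids v m).Finite :=
  (Set.finite_range fun I : Finset ι => (1 / (m : ℝ)) • ∑ i ∈ I, v i).subset
    fun _ ⟨I, _, hx⟩ => ⟨I, hx.symm⟩

theorem dist_centroid_centroid (m : ℕ) (I J : Finset ι) :
    dist ((1 / (m : ℝ)) • ∑ i ∈ I, v i) ((1 / (m : ℝ)) • ∑ i ∈ J, v i)
      = ‖∑ i ∈ I, v i - ∑ i ∈ J, v i‖ / m := by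
  rw [dist_smul₀, dist_eq_norm, Real.norm_of_nonneg (by positivity), one_div_mul_eq_div]

variable [Fintype ι] [DecidableEq ι]

theorem norm_sum_sub_sum_le_mul_diam_centroids {m : ℕ} {P Q : Finset ι} (hPQ : Disjoint P Q)
    (hcard : P.card = Q.card) (hPm : P.card ≤ m) (hmQ : m + Q.card ≤ Fintype.card ι) :
    ‖∑ i ∈ P, v i - ∑ i ∈ Q, v i‖ ≤ m * diam (centroids v m) := by
  obtain ⟨K, hPK, hKQ, hK⟩ := exists_subsuperset_card_eq (n := m)
    (subset_compl_iff_disjoint_right.2 hPQ) hPm (by rw [card_compl]; omega)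
  have hdisj : Disjoint (K \ P) Q :=
    disjoint_of_subset_left sdiff_subset (subset_compl_iff_disjoint_right.1 hKQ)
  have hK' : (K \ P ∪ Q).card = m := by
    rw [card_union_of_disjoint hdisj, card_sdiff_of_subset hPK]; omega
  have hswap : ∑ i ∈ K, v i - ∑ i ∈ K \ P ∪ Q, v i = ∑ i ∈ P, v i - ∑ i ∈ Q, v i := by
    rw [sum_union hdisj, ← sum_sdiff hPK]; abel
  rcases m.eq_zero_or_pos with rfl | hm
  · simp [card_eq_zero.1 (Nat.le_zero.1 hPm), card_eq_zero.1 (hcard ▸ Nat.le_zero.1 hPm)]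
  have hdist := dist_le_diam_of_mem (centroids_finite v m).isBounded ⟨K, hK, rfl⟩ ⟨_, hK', rfl⟩
  rw [dist_centroid_centroid, hswap, div_le_iff₀ (by positivity)] at hdist
  linarith

theorem norm_sum_sub_sum_le_two_mul_diam_centroids {m : ℕ} {A B : Finset ι}
    (hAB : Disjoint A B) (hcard : A.card = B.card) (hAm : A.card ≤ m)
    (hA : A.card + 2 * m ≤ 2 * Fintype.card ι) :
    ‖∑ i ∈ A, v i - ∑ i ∈ B, v i‖ ≤ 2 * m * diam (centroids v m) := by
  -- the pieces `A₁, B₁` and `A \ A₁, B \ B₁` all have size at most `|ι| - m`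
  obtain ⟨A₁, hA₁A, hA₁⟩ := exists_subset_card_eq (min_le_left A.card (Fintype.card ι - m))
  obtain ⟨B₁, hB₁B, hB₁⟩ := exists_subset_card_eq
    (by omega : min A.card (Fintype.card ι - m) ≤ B.card)
  have h₁ := norm_sum_sub_sum_le_mul_diam_centroids v (m := m)
    (disjoint_of_subset_left hA₁A (disjoint_of_subset_right hB₁B hAB)) (hA₁.trans hB₁.symm)
    (by omega) (by omega)
  have h₂ := norm_sum_sub_sum_le_mul_diam_centroids v (m := m) (P := A \ A₁) (Q := B \ B₁)
    (disjoint_of_subset_left sdiff_subset (disjoint_of_subset_right sdiff_subset hAB))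
    (by rw [card_sdiff_of_subset hA₁A, card_sdiff_of_subset hB₁B]; omega)
    (by rw [card_sdiff_of_subset hA₁A]; omega) (by rw [card_sdiff_of_subset hB₁B]; omega)
  calc ‖∑ i ∈ A, v i - ∑ i ∈ B, v i‖
      = ‖(∑ i ∈ A₁, v i - ∑ i ∈ B₁, v i) + (∑ i ∈ A \ A₁, v i - ∑ i ∈ B \ B₁, v i)‖ := by
        rw [← sum_sdiff hA₁A, ← sum_sdiff hB₁B]; abel_nf
    _ ≤ _ := norm_add_le_of_le h₁ h₂
    _ = 2 * m * diam (centroids v m) := by ring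

theorem diam_centroids_le {k m : ℕ} (hkm : k ≤ m) (hmk : 2 * m ≤ Fintype.card ι + k) :
    diam (centroids v k) ≤ 2 * m / k * diam (centroids v m) := by
  refine diam_le_of_forall_dist_le (by positivity) ?_
  rintro _ ⟨I, hI, rfl⟩ _ ⟨J, hJ, rfl⟩
  have hIJ : (I \ J).card + J.card ≤ Fintype.card ι :=
    card_sdiff_add_card I J ▸ card_le_univ _
  have hsdiff : (I \ J).card ≤ I.card := card_le_card sdiff_subset
  rw [dist_centroid_centroid, ← sum_sdiff_sub_sum_sdiff, div_mul_eq_mul_div]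
  gcongr
  exact norm_sum_sub_sum_le_two_mul_diam_centroids v disjoint_sdiff_sdiff
    (card_sdiff_comm (hI.trans hJ.symm)) (by omega) (by omega)

end

theorem diam_S₂_le_general (n d t : ℕ)
    (v : Fin n → EuclideanSpace ℝ (Fin d)) :
    Metric.diam (S₂ n d t v)
      ≤ (2 * ((n - t : ℕ) : ℝ) / ((n - 2 * t : ℕ) : ℝ)) * Metric.diam (SCent n d t v) ∧
    (7 * t < n →
      Metric.diam (S₂ n d t v) ≤ (14 / 5) * Metric.diam (SCent n d t v)) := by
  -- `S₂ n d t v` and `SCent n d t v` are `centroids v (n - 2 * t)` and `centroids v (n - t)`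
  have main : Metric.diam (S₂ n d t v)
      ≤ (2 * ((n - t : ℕ) : ℝ) / ((n - 2 * t : ℕ) : ℝ)) * Metric.diam (SCent n d t v) :=
    diam_centroids_le v (by omega) (by rw [Fintype.card_fin]; omega)
  refine ⟨main, fun h7 => main.trans (mul_le_mul_of_nonneg_right ?_ diam_nonneg)⟩
  rw [div_le_div_iff₀ (by norm_cast; omega) (by norm_num)]
  exact_mod_cast (by omega : 2 * (n - t) * 5 ≤ 14 * (n - 2 * t))

/-- `diam S₂ ≤ (2(n-t)/(n-2t)) · diam S_Cent`; in particular, if `7t < n`,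
then `diam S₂ ≤ (14/5) · diam S_Cent`. -/
theorem diam_S₂_le (n d t : ℕ) (h : 1 ≤ n - 2 * t)
    (v : Fin n → EuclideanSpace ℝ (Fin d)) :
    Metric.diam (S₂ n d t v)
      ≤ (2 * ((n - t : ℕ) : ℝ) / ((n - 2 * t : ℕ) : ℝ)) * Metric.diam (SCent n d t v) ∧
    (7 * t < n →
      Metric.diam (S₂ n d t v) ≤ (14 / 5) * Metric.diam (SCent n d t v)) :=
  diam_S₂_le_general n d t v
end

section
/- Let v₁,…,vₙ ∈ ℝ^d, let t be an integer with 0 ≤ 2t < n, let D ≥ 0, and let A, B ⊆ {1,…,n} with |A| = |B| = n−t such that diam({v_i : i ∈ A}) ≤ D and diam({v_i : i ∈ B}) ≤ D. Then the centroids c_A = (1/(n−t))·∑_{i∈A} v_i and c_B = (1/(n−t))·∑_{i∈B} v_i satisfy dist(c_A, c_B) ≤ (2t/(n−t)) · D. -/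
/-!
Since `2t < n`, the index sets `A` and `B` share some index `x`. The sums over `A` and over `B`
differ only by the sums over `A \ B` and `B \ A`, which have the same number `≤ t` of terms;
recentring every term at `v x` makes each of them a vector of norm at most `D`.
-/

open Finset

section SumDifference

variable {ι E : Type*} [DecidableEq ι]

/-- Recentring at `c` costs nothing because `A \ B` and `B \ A` have equally many elements. -/
theorem Finset.sum_sub_sum_eq_sum_sdiff_sub_sum_sdiff_sub [AddCommGroup E] (v : ι → E)
    {A B : Finset ι} (hAB : #A = #B) (c : E) :
    ∑ i ∈ A, v i - ∑ i ∈ B, v i = ∑ i ∈ A \ B, (v i - c) - ∑ i ∈ B \ A, (v i - c) := by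
  rw [sum_sub_distrib, sum_sub_distrib, sum_const, sum_const, card_sdiff_comm hAB,
    sub_sub_sub_cancel_right, sum_sdiff_sub_sum_sdiff]

theorem Finset.norm_sum_sub_sum_le_of_card_eq [SeminormedAddCommGroup E] (v : ι → E)
    {A B : Finset ι} (hAB : #A = #B) {c : E} {D : ℝ}
    (hA : ∀ i ∈ A, dist (v i) c ≤ D) (hB : ∀ i ∈ B, dist (v i) c ≤ D) :
    ‖∑ i ∈ A, v i - ∑ i ∈ B, v i‖ ≤ 2 * #(A \ B) * D := by
  have bound {S T : Finset ι} (h : ∀ i ∈ S, dist (v i) c ≤ D) :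
      ‖∑ i ∈ S \ T, (v i - c)‖ ≤ #(S \ T) * D := by
    simpa using norm_sum_le_of_le (S \ T) fun i hi ↦
      (dist_eq_norm (v i) c).symm.le.trans (h i (mem_sdiff.mp hi).1)
  rw [sum_sub_sum_eq_sum_sdiff_sub_sum_sdiff_sub v hAB c]
  calc _ ≤ ‖∑ i ∈ A \ B, (v i - c)‖ + ‖∑ i ∈ B \ A, (v i - c)‖ := norm_sub_le _ _
    _ ≤ #(A \ B) * D + #(B \ A) * D := add_le_add (bound hA) (bound hB)
    _ = 2 * #(A \ B) * D := by rw [card_sdiff_comm hAB.symm]; ring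

end SumDifference

theorem Finset.dist_le_diam_image {ι X : Type*} [PseudoMetricSpace X] (v : ι → X)
    {A : Finset ι} {i j : ι} (hi : i ∈ A) (hj : j ∈ A) :
    dist (v i) (v j) ≤ Metric.diam (v '' ↑A) :=
  Metric.dist_le_diam_of_mem (A.finite_toSet.image v).isBounded
    (Set.mem_image_of_mem v hi) (Set.mem_image_of_mem v hj)

theorem Finset.card_sdiff_le_of_card_eq_sub {α : Type*} [Fintype α] [DecidableEq α]
    {A B : Finset α} {t : ℕ} (hB : #B = Fintype.card α - t) : #(A \ B) ≤ t := by
  have := card_le_card (show A \ B ⊆ Bᶜ by rw [sdiff_eq]; exact inf_le_right)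
  rw [card_compl] at this
  omega

theorem dist_centroids_le_general (n d t : ℕ) (ht : 2 * t < n) (D : ℝ)
    (v : Fin n → EuclideanSpace ℝ (Fin d))
    (A B : Finset (Fin n)) (hA : A.card = n - t) (hB : B.card = n - t)
    (hdA : Metric.diam (v '' ↑A) ≤ D) (hdB : Metric.diam (v '' ↑B) ≤ D) :
    dist ((1 / ((n - t : ℕ) : ℝ)) • ∑ i ∈ A, v i)
        ((1 / ((n - t : ℕ) : ℝ)) • ∑ i ∈ B, v i)
      ≤ (2 * (t : ℝ) / ((n - t : ℕ) : ℝ)) * D := by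
  obtain ⟨x, hxA, hxB⟩ : ∃ x, x ∈ A ∧ x ∈ B := by
    simpa [Finset.Nonempty] using inter_nonempty_of_card_lt_card_add_card
      (subset_univ A) (subset_univ B) (by simp only [card_univ, Fintype.card_fin]; omega)
  have hsum := norm_sum_sub_sum_le_of_card_eq v (hA.trans hB.symm)
    (fun i hi ↦ (dist_le_diam_image v hi hxA).trans hdA)
    (fun i hi ↦ (dist_le_diam_image v hi hxB).trans hdB)
  have hsdiff : (#(A \ B) : ℝ) ≤ t := by
    exact_mod_cast card_sdiff_le_of_card_eq_sub (by simpa using hB)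
  have hD : 0 ≤ D := Metric.diam_nonneg.trans hdA
  rw [dist_smul₀, dist_eq_norm, Real.norm_of_nonneg (by positivity), div_mul_eq_mul_div,
    div_mul_eq_mul_div, one_mul]
  gcongr
  exact hsum.trans (by gcongr)

/-- If `A` and `B` are two `(n-t)`-element subsets of the `n` input vectors, each of diameter
at most `D`, then their centroids are at distance at most `(2t/(n-t)) · D`. -/
theorem dist_centroids_le (n d t : ℕ) (ht : 2 * t < n) (D : ℝ) (hD : 0 ≤ D)
    (v : Fin n → EuclideanSpace ℝ (Fin d))
    (A B : Finset (Fin n)) (hA : A.card = n - t) (hB : B.card = n - t)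
    (hdA : Metric.diam (v '' ↑A) ≤ D) (hdB : Metric.diam (v '' ↑B) ≤ D) :
    dist ((1 / ((n - t : ℕ) : ℝ)) • ∑ i ∈ A, v i)
        ((1 / ((n - t : ℕ) : ℝ)) • ∑ i ∈ B, v i)
      ≤ (2 * (t : ℝ) / ((n - t : ℕ) : ℝ)) * D :=
  dist_centroids_le_general n d t ht D v A B hA hB hdA hdB
end

section
/- Let n, t, m be integers with 3t < n and n−t ≤ m ≤ n, and let x₁ ≤ x₂ ≤ … ≤ x_m be real numbers. Set s = m−(n−t) and let V = (1/(2(n−t)−m)) · ∑_{j=s+1}^{n−t} x_j be the trimmed mean obtained by removing the s smallest and s largest values. Then (i) x_{s+1} ≤ V ≤ x_{n−t}, and (ii) (1/(n−t))·∑_{j=1}^{n−t} x_j ≤ V ≤ (1/(n−t))·∑_{j=s+1}^{m} x_j; that is, V lies both in the trimmed interval [x_{s+1}, x_{n−t}] and in the interval bounded by the mean of the n−t smallest values and the mean of the n−t largest values. -/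
/-!
For a nondecreasing sequence, the mean over a window of indices lies between the values at the
window's ends, which is (i). Extending a window by smaller values on the left lowers its mean,
and extending it by larger values on the right raises it: the mean of the `n - t` smallest
values is the window `s+1, …, n-t` extended by `x₁, …, x_s`, and the mean of the `n - t` largest
is the same window extended by `x_{n-t+1}, …, x_m`, which is (ii).
-/

open Finset
open scoped BigOperators

section Field
variable {ι K : Type*} [Field K] [LinearOrder K] [IsStrictOrderedRing K] [DecidableEq ι]
  {s t : Finset ι} {f : ι → K}

lemma expect_union_le_expect_right (hst : Disjoint s t) (ht : t.Nonempty)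
    (hf : ∀ i ∈ s, ∀ j ∈ t, f i ≤ f j) : 𝔼 i ∈ s ∪ t, f i ≤ 𝔼 i ∈ t, f i := by
  set μ := 𝔼 i ∈ t, f i
  have hs_le : ∑ i ∈ s, f i ≤ #s * μ := by
    simpa using sum_le_card_nsmul s f μ fun i hi => le_expect ht (hf i hi)
  have ht_eq : ∑ i ∈ t, f i = #t * μ := by
    rw [← card_smul_expect, nsmul_eq_mul]
  have hcard : (0 : K) < #(s ∪ t) := by exact_mod_cast (ht.mono subset_union_right).card_pos
  rw [expect_eq_sum_div_card, div_le_iff₀ hcard, sum_union hst, card_union_of_disjoint hst]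
  push_cast
  linarith

lemma expect_le_expect_union_left (hst : Disjoint s t) (hs : s.Nonempty)
    (hf : ∀ i ∈ s, ∀ j ∈ t, f i ≤ f j) : 𝔼 i ∈ s, f i ≤ 𝔼 i ∈ s ∪ t, f i := by
  have := expect_union_le_expect_right (f := fun i => -f i) hst.symm hs
    fun j hj i hi => neg_le_neg (hf i hi j hj)
  rwa [expect_neg_distrib, expect_neg_distrib, neg_le_neg_iff, union_comm] at this

end Field

namespace MonotoneOn
variable {K : Type*} [Field K] [LinearOrder K] [IsStrictOrderedRing K] {x : ℕ → K} {a b c : ℕ}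

lemma expect_Ioc_mem_Icc (hx : MonotoneOn x (Set.Ioc a b)) (hab : a < b) :
    𝔼 i ∈ Ioc a b, x i ∈ Set.Icc (x (a + 1)) (x b) := by
  have hne : (Ioc a b).Nonempty := nonempty_Ioc.2 hab
  have hmem : ∀ i ∈ Ioc a b, i ∈ Set.Ioc a b := fun i hi => by simpa using hi
  refine ⟨le_expect hne fun i hi => ?_, expect_le hne fun i hi => ?_⟩
  · exact hx ⟨by omega, by omega⟩ (hmem i hi) (hmem i hi).1
  · exact hx (hmem i hi) ⟨hab, le_rfl⟩ (hmem i hi).2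

lemma expect_Ioc_mono_left (hx : MonotoneOn x (Set.Ioc a c)) (hab : a ≤ b) (hbc : b < c) :
    𝔼 i ∈ Ioc a c, x i ≤ 𝔼 i ∈ Ioc b c, x i := by
  rw [← Ioc_union_Ioc_eq_Ioc hab hbc.le]
  refine expect_union_le_expect_right (Ioc_disjoint_Ioc_of_le le_rfl) (nonempty_Ioc.2 hbc) ?_
  intro i hi j hj
  rw [mem_Ioc] at hi hj
  exact hx ⟨hi.1, by omega⟩ ⟨by omega, hj.2⟩ (by omega)

lemma expect_Ioc_mono_right (hx : MonotoneOn x (Set.Ioc a c)) (hab : a < b) (hbc : b ≤ c) :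
    𝔼 i ∈ Ioc a b, x i ≤ 𝔼 i ∈ Ioc a c, x i := by
  rw [← Ioc_union_Ioc_eq_Ioc hab.le hbc]
  refine expect_le_expect_union_left (Ioc_disjoint_Ioc_of_le le_rfl) (nonempty_Ioc.2 hab) ?_
  intro i hi j hj
  rw [mem_Ioc] at hi hj
  exact hx ⟨hi.1, by omega⟩ ⟨by omega, hj.2⟩ (by omega)

end MonotoneOn

/-- Synchronous trimmed mean: with `3t < n` and `n - t ≤ m ≤ n` values `x₁ ≤ … ≤ x_m`
(1-indexed), setting `s = m - (n-t)`, the trimmed mean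
`V = (1/(2(n-t)-m)) · ∑_{j=s+1}^{n-t} x_j` satisfies
`x_{s+1} ≤ V ≤ x_{n-t}` and
`(1/(n-t))·∑_{j=1}^{n-t} x_j ≤ V ≤ (1/(n-t))·∑_{j=s+1}^{m} x_j`. -/
theorem trimmed_mean_mem_boxes (n t m : ℕ) (ht : 3 * t < n)
    (hm1 : n - t ≤ m) (hm2 : m ≤ n)
    (x : ℕ → ℝ) (hx : ∀ i j, 1 ≤ i → i ≤ j → j ≤ m → x i ≤ x j) :
    let s := m - (n - t)
    let V := (1 / ((2 * (n - t) - m : ℕ) : ℝ)) * ∑ j ∈ Finset.Icc (s + 1) (n - t), x j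
    (x (s + 1) ≤ V ∧ V ≤ x (n - t)) ∧
    ((1 / ((n - t : ℕ) : ℝ)) * ∑ j ∈ Finset.Icc 1 (n - t), x j ≤ V ∧
      V ≤ (1 / ((n - t : ℕ) : ℝ)) * ∑ j ∈ Finset.Icc (s + 1) m, x j) := by
  intro s V
  set k := n - t
  have hsk : s < k := by omega
  have hmono : MonotoneOn x (Set.Ioc 0 m) := fun i hi j hj hij => hx i j hi.1 hij hj.2
  have hmean (a b : ℕ) : 1 / ((b - a : ℕ) : ℝ) * ∑ j ∈ Icc (a + 1) b, x j = 𝔼 j ∈ Ioc a b, x j := by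
    rw [Icc_add_one_left_eq_Ioc, expect_eq_sum_div_card, Nat.card_Ioc, one_div_mul_eq_div]
  have hV : V = 𝔼 j ∈ Ioc s k, x j := by rw [← hmean, show k - s = 2 * k - m by omega]
  have hlow : 1 / (k : ℝ) * ∑ j ∈ Icc 1 k, x j = 𝔼 j ∈ Ioc 0 k, x j := hmean 0 k
  have hhigh : 1 / (k : ℝ) * ∑ j ∈ Icc (s + 1) m, x j = 𝔼 j ∈ Ioc s m, x j := by
    rw [← hmean, show m - s = k by omega]
  rw [hV, hlow, hhigh]
  exact ⟨(hmono.mono (Set.Ioc_subset_Ioc (Nat.zero_le s) hm1)).expect_Ioc_mem_Icc hsk,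
    (hmono.mono (Set.Ioc_subset_Ioc_right hm1)).expect_Ioc_mono_left (Nat.zero_le s) hsk,
    (hmono.mono (Set.Ioc_subset_Ioc_left (Nat.zero_le s))).expect_Ioc_mono_right hsk hm1⟩
end

section
/- Let S be a nonempty bounded subset of ℝ^d with the Euclidean norm, and for each coordinate k ∈ {1,…,d} let m_k = inf{ s_k : s ∈ S } and M_k = sup{ s_k : s ∈ S }. If x, y ∈ ℝ^d satisfy m_k ≤ x_k ≤ M_k and m_k ≤ y_k ≤ M_k for every k, then dist(x, y) ≤ √d · diam(S). -/
/-! In each coordinate `k`, both `x k` and `y k` lie in `[sInf, sSup]` of the projection of `S`,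
an interval whose length is the diameter of that projection, hence at most `diam S` because
coordinate projections are 1-Lipschitz. Summing the `d` squared coordinate bounds gives
`dist x y ≤ √d · diam S`. -/

open Metric Set

theorem Real.dist_le_diam_of_mem_Icc_sInf_sSup {s : Set ℝ} (hs : Bornology.IsBounded s)
    {a b : ℝ} (ha : a ∈ Icc (sInf s) (sSup s)) (hb : b ∈ Icc (sInf s) (sSup s)) :
    dist a b ≤ diam s :=
  (Real.dist_le_of_mem_Icc ha hb).trans_eq (Real.diam_eq hs).symm

theorem LipschitzWith.dist_le_diam_of_mem_Icc_sInf_sSup_image {α : Type*} [PseudoMetricSpace α]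
    {f : α → ℝ} (hf : LipschitzWith 1 f) {S : Set α} (hS : Bornology.IsBounded S) {a b : ℝ}
    (ha : a ∈ Icc (sInf (f '' S)) (sSup (f '' S)))
    (hb : b ∈ Icc (sInf (f '' S)) (sSup (f '' S))) :
    dist a b ≤ diam S :=
  calc dist a b ≤ diam (f '' S) :=
        Real.dist_le_diam_of_mem_Icc_sInf_sSup (hf.isBounded_image hS) ha hb
    _ ≤ diam S := by simpa using hf.diam_image_le S hS

theorem EuclideanSpace.lipschitzWith_apply {ι : Type*} [Fintype ι] (i : ι) :
    LipschitzWith 1 fun x : EuclideanSpace ℝ ι => x i :=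
  LipschitzWith.of_dist_le_mul fun x y => by simpa using PiLp.dist_apply_le x y i

theorem EuclideanSpace.dist_le_sqrt_card_mul_of_forall_dist_apply_le {ι : Type*} [Fintype ι]
    {x y : EuclideanSpace ℝ ι} {C : ℝ} (hC : 0 ≤ C) (h : ∀ i, dist (x i) (y i) ≤ C) :
    dist x y ≤ √(Fintype.card ι) * C :=
  calc dist x y = √(∑ i, dist (x i) (y i) ^ 2) := EuclideanSpace.dist_eq x y
    _ ≤ √(∑ _i : ι, C ^ 2) := by gcongr with i; exact h i
    _ = √(Fintype.card ι) * C := by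
      rw [Finset.sum_const, Finset.card_univ, nsmul_eq_mul, Real.sqrt_mul (Nat.cast_nonneg _),
        Real.sqrt_sq hC]

theorem dist_le_sqrt_mul_diam_of_mem_boundingBox_general (d : ℕ)
    (S : Set (EuclideanSpace ℝ (Fin d)))
    (hb : Bornology.IsBounded S) (x y : EuclideanSpace ℝ (Fin d))
    (hx : ∀ k : Fin d, sInf ((fun s => s k) '' S) ≤ x k ∧ x k ≤ sSup ((fun s => s k) '' S))
    (hy : ∀ k : Fin d, sInf ((fun s => s k) '' S) ≤ y k ∧ y k ≤ sSup ((fun s => s k) '' S)) :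
    dist x y ≤ Real.sqrt d * Metric.diam S := by
  simpa using EuclideanSpace.dist_le_sqrt_card_mul_of_forall_dist_apply_le diam_nonneg fun k =>
    (EuclideanSpace.lipschitzWith_apply k).dist_le_diam_of_mem_Icc_sInf_sSup_image hb (hx k) (hy k)

/-- Any two points of the coordinate-parallel bounding box of a nonempty bounded set
`S ⊆ ℝ^d` are at distance at most `√d · diam S`. -/
theorem dist_le_sqrt_mul_diam_of_mem_boundingBox (d : ℕ)
    (S : Set (EuclideanSpace ℝ (Fin d))) (hS : S.Nonempty)
    (hb : Bornology.IsBounded S) (x y : EuclideanSpace ℝ (Fin d))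
    (hx : ∀ k : Fin d, sInf ((fun s => s k) '' S) ≤ x k ∧ x k ≤ sSup ((fun s => s k) '' S))
    (hy : ∀ k : Fin d, sInf ((fun s => s k) '' S) ≤ y k ∧ y k ≤ sSup ((fun s => s k) '' S)) :
    dist x y ≤ Real.sqrt d * Metric.diam S :=
  dist_le_sqrt_mul_diam_of_mem_boundingBox_general d S hb x y hx hy
end

section
/- Let v₁,…,vₙ ∈ ℝ^d, let t, f be integers with 0 ≤ f ≤ t and n−t ≥ 1, and let C ⊆ {1,…,n} with |C| = n−f. Suppose x ∈ ℝ^d satisfies, for every coordinate k ∈ {1,…,d}, min{ c_k : c ∈ S_Cent } ≤ x_k ≤ max{ c_k : c ∈ S_Cent }. Then dist( x , (1/(n−f))·∑_{i∈C} v_i ) ≤ √d · diam(S_Cent). -/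
open Finset

section aux
variable {α : Type*} [DecidableEq α]

lemma count_subsets_containing (s : Finset α) (i : α) (hi : i ∈ s) (m : ℕ) (hm : 1 ≤ m) :
    ((s.powersetCard m).filter (fun I => i ∈ I)).card = (s.card - 1).choose (m - 1) := by
  rw [← Finset.card_erase_of_mem hi, ← Finset.card_powersetCard]
  apply Finset.card_bij' (fun I _ => I.erase i) (fun J _ => insert i J)
  · intro I hI
    simp only [mem_filter] at hI
    exact Finset.insert_erase hI.2
  · intro J hJ
    rw [Finset.mem_powersetCard] at hJ
    exact Finset.erase_insert (fun h => (Finset.notMem_erase i s) (hJ.1 h))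
  · intro I hI
    simp only [mem_filter, Finset.mem_powersetCard] at hI
    rw [Finset.mem_powersetCard]
    exact ⟨Finset.erase_subset_erase _ hI.1.1,
      by rw [Finset.card_erase_of_mem hI.2, hI.1.2]⟩
  · intro J hJ
    rw [Finset.mem_powersetCard] at hJ
    have hiJ : i ∉ J := fun h => (Finset.notMem_erase i s) (hJ.1 h)
    simp only [mem_filter, Finset.mem_powersetCard]
    refine ⟨⟨Finset.insert_subset hi (hJ.1.trans (Finset.erase_subset _ _)), ?_⟩,
      Finset.mem_insert_self _ _⟩
    rw [Finset.card_insert_of_notMem hiJ, hJ.2, Nat.sub_add_cancel hm]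

lemma double_count (s : Finset α) (m : ℕ) (hm : 1 ≤ m) (g : α → ℝ) :
    ∑ I ∈ s.powersetCard m, ∑ i ∈ I, g i
      = ((s.card - 1).choose (m - 1) : ℝ) * ∑ i ∈ s, g i := by
  have h1 : ∀ I ∈ s.powersetCard m, ∑ i ∈ I, g i = ∑ i ∈ s, if i ∈ I then g i else 0 := by
    intro I hI
    rw [Finset.mem_powersetCard] at hI
    rw [Finset.sum_ite_mem, Finset.inter_eq_right.mpr hI.1]
  rw [Finset.sum_congr rfl h1, Finset.sum_comm]
  rw [Finset.mul_sum]
  refine Finset.sum_congr rfl fun i hi => ?_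
  rw [← Finset.sum_filter, Finset.sum_const, count_subsets_containing s i hi m hm]
  simp [nsmul_eq_mul]

end aux

lemma SCent_finite (n d t : ℕ) (v : Fin n → EuclideanSpace ℝ (Fin d)) :
    (SCent n d t v).Finite := by
  apply Set.Finite.subset (Set.finite_range
    (fun I : Finset (Fin n) => (1 / ((n - t : ℕ) : ℝ)) • ∑ i ∈ I, v i))
  rintro x ⟨I, _, rfl⟩
  exact ⟨I, rfl⟩

/-- Any point of the coordinate-parallel bounding box of `S_Cent` (the centroid box) is at
distance at most `√d · diam S_Cent` from the true centroid (the centroid of the `n - f`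
correct vectors). -/
theorem dist_centroidBox_trueCentroid_le (n d t f : ℕ) (hf : f ≤ t) (hnt : 1 ≤ n - t)
    (v : Fin n → EuclideanSpace ℝ (Fin d)) (C : Finset (Fin n)) (hC : C.card = n - f)
    (x : EuclideanSpace ℝ (Fin d))
    (hx : ∀ k : Fin d,
      sInf ((fun c => c k) '' SCent n d t v) ≤ x k ∧
      x k ≤ sSup ((fun c => c k) '' SCent n d t v)) :
    dist x ((1 / ((n - f : ℕ) : ℝ)) • ∑ i ∈ C, v i)
      ≤ Real.sqrt d * Metric.diam (SCent n d t v) := by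
  set m := n - t with hm_def
  set c := n - f with hc_def
  have hmc : m ≤ c := Nat.sub_le_sub_left hf n
  have hc1 : 1 ≤ c := hnt.trans hmc
  set y := (1 / ((c : ℕ) : ℝ)) • ∑ i ∈ C, v i with hy_def
  have hfin : (SCent n d t v).Finite := SCent_finite n d t v
  have hbdd : Bornology.IsBounded (SCent n d t v) := hfin.isBounded
  -- nonemptiness of powersetCard
  have hPne : (C.powersetCard m).Nonempty :=
    Finset.powersetCard_nonempty.mpr (by rw [hC]; exact hmc)
  have hSne : (SCent n d t v).Nonempty := by
    obtain ⟨I, hI⟩ := hPne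
    rw [Finset.mem_powersetCard] at hI
    exact ⟨_, I, hI.2.trans hm_def, rfl⟩
  have hdiam0 : 0 ≤ Metric.diam (SCent n d t v) := Metric.diam_nonneg
  -- per-coordinate facts
  have key : ∀ k : Fin d, |x k - y k| ≤ Metric.diam (SCent n d t v) := by
    intro k
    set Sk := (fun c => c k) '' SCent n d t v with hSk
    have hSkfin : Sk.Finite := hfin.image _
    have hSkne : Sk.Nonempty := hSne.image _
    have hbddA : BddAbove Sk := hSkfin.bddAbove
    have hbddB : BddBelow Sk := hSkfin.bddBelow
    -- y k lies between sInf Sk and sSup Sk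
    have hsumapp : ∀ (s : Finset (Fin n)), (∑ i ∈ s, v i) k = ∑ i ∈ s, v i k :=
      fun s => by rw [WithLp.ofLp_sum, Finset.sum_apply]
    have hyk : y k = (1 / (c : ℝ)) * ∑ i ∈ C, v i k := by
      rw [hy_def, PiLp.smul_apply, smul_eq_mul, hsumapp]
    have hzmem : ∀ I ∈ C.powersetCard m,
        (1 / ((m : ℕ) : ℝ)) * ∑ i ∈ I, v i k ∈ Sk := by
      intro I hI
      rw [Finset.mem_powersetCard] at hI
      refine ⟨(1 / ((m : ℕ) : ℝ)) • ∑ i ∈ I, v i, ⟨I, hI.2.trans hm_def, rfl⟩, ?_⟩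
      show (1 / ((m : ℕ) : ℝ)) • (∑ i ∈ I, v i) k = _
      rw [smul_eq_mul, hsumapp]
    set N := (C.powersetCard m).card with hN
    have hNval : N = c.choose m := by rw [hN, Finset.card_powersetCard, hC]
    have hN1 : 1 ≤ N := Finset.card_pos.mpr hPne
    -- sum identity
    have hm0 : ((m : ℕ) : ℝ) ≠ 0 := Nat.cast_ne_zero.mpr (by omega)
    have hc0 : ((c : ℕ) : ℝ) ≠ 0 := Nat.cast_ne_zero.mpr (by omega)
    have hsum : ∑ I ∈ C.powersetCard m, (1 / ((m : ℕ) : ℝ)) * ∑ i ∈ I, v i k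
        = (N : ℝ) * y k := by
      rw [← Finset.mul_sum, double_count C m hnt (fun i => v i k), hC, hyk]
      have hchoose : ((c : ℕ) : ℝ) * (((c - 1).choose (m - 1) : ℕ) : ℝ)
          = ((c.choose m : ℕ) : ℝ) * ((m : ℕ) : ℝ) := by
        have h := Nat.add_one_mul_choose_eq (c - 1) (m - 1)
        rw [Nat.sub_add_cancel hc1,
          Nat.sub_add_cancel hnt] at h
        exact_mod_cast congrArg (fun z : ℕ => (z : ℝ)) h
      rw [hNval]
      field_simp
      linear_combination (∑ i ∈ C, v i k) * hchoose
    have hzlo : ∀ I ∈ C.powersetCard m, sInf Sk ≤ (1 / ((m : ℕ) : ℝ)) * ∑ i ∈ I, v i k :=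
      fun I hI => csInf_le hbddB (hzmem I hI)
    have hzhi : ∀ I ∈ C.powersetCard m, (1 / ((m : ℕ) : ℝ)) * ∑ i ∈ I, v i k ≤ sSup Sk :=
      fun I hI => le_csSup hbddA (hzmem I hI)
    have hNpos : (0 : ℝ) < (N : ℝ) := by exact_mod_cast hN1
    have hylo : sInf Sk ≤ y k := by
      have h1 : (N : ℝ) * sInf Sk ≤ (N : ℝ) * y k := by
        rw [← hsum]
        calc (N : ℝ) * sInf Sk = ∑ _I ∈ C.powersetCard m, sInf Sk := by
              rw [Finset.sum_const, nsmul_eq_mul]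
          _ ≤ _ := Finset.sum_le_sum hzlo
      exact le_of_mul_le_mul_left h1 hNpos
    have hyhi : y k ≤ sSup Sk := by
      have h1 : (N : ℝ) * y k ≤ (N : ℝ) * sSup Sk := by
        rw [← hsum]
        calc ∑ I ∈ C.powersetCard m, (1 / ((m : ℕ) : ℝ)) * ∑ i ∈ I, v i k
            ≤ ∑ _I ∈ C.powersetCard m, sSup Sk := Finset.sum_le_sum hzhi
          _ = (N : ℝ) * sSup Sk := by rw [Finset.sum_const, nsmul_eq_mul]
      exact le_of_mul_le_mul_left h1 hNpos
    -- sSup - sInf ≤ diam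
    have hgap : sSup Sk - sInf Sk ≤ Metric.diam (SCent n d t v) := by
      obtain ⟨a, ha, hak⟩ := hSkne.csSup_mem hSkfin
      obtain ⟨b, hb, hbk⟩ := hSkne.csInf_mem hSkfin
      have hcoord : dist (a k) (b k) ≤ dist a b := by
        rw [EuclideanSpace.dist_eq]
        have h0 : dist (a k) (b k) = Real.sqrt (dist (a k) (b k) ^ 2) :=
          (Real.sqrt_sq dist_nonneg).symm
        rw [h0]
        apply Real.sqrt_le_sqrt
        exact Finset.single_le_sum (f := fun i => dist (a i) (b i) ^ 2) (fun i _ => by positivity) (Finset.mem_univ k)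
      have hak' : a k = sSup Sk := hak
      have hbk' : b k = sInf Sk := hbk
      calc sSup Sk - sInf Sk = a k - b k := by rw [hak', hbk']
        _ ≤ |a k - b k| := le_abs_self _
        _ = dist (a k) (b k) := (Real.dist_eq _ _).symm
        _ ≤ dist a b := hcoord
        _ ≤ Metric.diam (SCent n d t v) := Metric.dist_le_diam_of_mem hbdd ha hb
    have hxk := hx k
    rw [abs_sub_le_iff]
    constructor
    · linarith [hxk.2]
    · linarith [hxk.1]
  -- assemble
  rw [EuclideanSpace.dist_eq]
  have hsum2 : ∑ k : Fin d, dist (x k) (y k) ^ 2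
      ≤ (d : ℝ) * Metric.diam (SCent n d t v) ^ 2 := by
    calc ∑ k : Fin d, dist (x k) (y k) ^ 2
        ≤ ∑ _k : Fin d, Metric.diam (SCent n d t v) ^ 2 := by
          refine Finset.sum_le_sum fun k _ => ?_
          have h := key k
          rw [Real.dist_eq]
          exact pow_le_pow_left₀ (abs_nonneg _) h 2
      _ = (d : ℝ) * Metric.diam (SCent n d t v) ^ 2 := by
          rw [Finset.sum_const, nsmul_eq_mul, Finset.card_univ, Fintype.card_fin]
  calc Real.sqrt (∑ k : Fin d, dist (x k) (y k) ^ 2)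
      ≤ Real.sqrt ((d : ℝ) * Metric.diam (SCent n d t v) ^ 2) := Real.sqrt_le_sqrt hsum2
    _ = Real.sqrt d * Metric.diam (SCent n d t v) := by
        rw [Real.sqrt_mul (Nat.cast_nonneg d), Real.sqrt_sq hdiam0]
end

section
/- Let n, t, f, m be integers with 0 ≤ f ≤ t, n−t ≥ 1, and n−t ≤ m ≤ n. Let c₁,…,c_{n−f} be real numbers (the correct values) and let w₁ ≤ w₂ ≤ … ≤ w_m be a sorted list of m real numbers that contains all of c₁,…,c_{n−f} (counted with multiplicity). Then w_{m−(n−t)+1} ≥ min_i c_i and w_{n−t} ≤ max_i c_i; that is, the interval [w_{m−(n−t)+1}, w_{n−t}] obtained by trimming the m−(n−t) smallest and m−(n−t) largest values is contained in [min_i c_i, max_i c_i]. -/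
/-!
At least `n - t` of the `m` sorted positions hold correct values. Those positions cannot all lie
strictly above position `m - (n - t) + 1`, nor all strictly below position `n - t`, since each of
these ranges has only `n - t - 1` slots; monotonicity of `w` then sandwiches the trimmed endpoints
between correct values.
-/

open Finset

namespace Finset

theorem exists_mem_le_sub_add_one_of_le_card {s : Finset ℕ} {m k : ℕ}
    (hs : ∀ x ∈ s, x ≤ m) (hk : 1 ≤ k) (hks : k ≤ #s) : ∃ x ∈ s, x ≤ m - k + 1 := by
  by_contra! h
  have : #s ≤ #(Ioc (m - k + 1) m) :=
    card_le_card fun x hx ↦ mem_Ioc.2 ⟨h x hx, hs x hx⟩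
  rw [Nat.card_Ioc] at this
  omega

theorem exists_mem_ge_of_le_card {s : Finset ℕ} {k : ℕ} (hs : ∀ x ∈ s, 1 ≤ x) (hk : 1 ≤ k)
    (hks : k ≤ #s) : ∃ x ∈ s, k ≤ x := by
  by_contra! h
  have : #s ≤ #(Ico 1 k) :=
    card_le_card fun x hx ↦ mem_Ico.2 ⟨hs x hx, h x hx⟩
  rw [Nat.card_Ico] at this
  omega

end Finset

theorem trimmed_interval_subset_trusted_interval_general (n t f m : ℕ) (hf : f ≤ t)
    (hnt : 1 ≤ n - t) (hm1 : n - t ≤ m)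
    (c : Fin (n - f) → ℝ) (w : ℕ → ℝ)
    (hw : ∀ i j, 1 ≤ i → i ≤ j → j ≤ m → w i ≤ w j)
    (φ : Fin (n - f) → ℕ) (hφinj : Function.Injective φ)
    (hφmem : ∀ i, 1 ≤ φ i ∧ φ i ≤ m) (hφval : ∀ i, w (φ i) = c i) :
    (⨅ i, c i) ≤ w (m - (n - t) + 1) ∧ w (n - t) ≤ ⨆ i, c i := by
  have hcard : n - t ≤ #(univ.image φ) := by
    rw [card_image_of_injective _ hφinj, card_univ, Fintype.card_fin]
    omega
  have hpos : ∀ x ∈ univ.image φ, 1 ≤ x ∧ x ≤ m := by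
    simpa only [mem_image, mem_univ, true_and, forall_exists_index, forall_apply_eq_imp_iff]
      using hφmem
  obtain ⟨x, hx, hlow⟩ :=
    exists_mem_le_sub_add_one_of_le_card (fun x hx ↦ (hpos x hx).2) hnt hcard
  obtain ⟨y, hy, hhigh⟩ := exists_mem_ge_of_le_card (fun x hx ↦ (hpos x hx).1) hnt hcard
  obtain ⟨i, -, rfl⟩ := mem_image.1 hx
  obtain ⟨j, -, rfl⟩ := mem_image.1 hy
  constructor
  · refine ciInf_le_of_le (Set.finite_range c).bddBelow i ?_
    rw [← hφval]
    exact hw _ _ (hφmem i).1 hlow (by omega)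
  · refine le_ciSup_of_le (Set.finite_range c).bddAbove j ?_
    rw [← hφval]
    exact hw _ _ (by omega) hhigh (hφmem j).2

/-- If the sorted list `w₁ ≤ … ≤ w_m` (with `n - t ≤ m ≤ n`) contains all `n - f` correct
values `c₁, …, c_{n-f}` with multiplicity, then the trimmed interval
`[w_{m-(n-t)+1}, w_{n-t}]` is contained in `[min_i c_i, max_i c_i]`. -/
theorem trimmed_interval_subset_trusted_interval (n t f m : ℕ) (hf : f ≤ t)
    (hnt : 1 ≤ n - t) (hm1 : n - t ≤ m) (hm2 : m ≤ n)
    (c : Fin (n - f) → ℝ) (w : ℕ → ℝ)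
    (hw : ∀ i j, 1 ≤ i → i ≤ j → j ≤ m → w i ≤ w j)
    (φ : Fin (n - f) → ℕ) (hφinj : Function.Injective φ)
    (hφmem : ∀ i, 1 ≤ φ i ∧ φ i ≤ m) (hφval : ∀ i, w (φ i) = c i) :
    (⨅ i, c i) ≤ w (m - (n - t) + 1) ∧ w (n - t) ≤ ⨆ i, c i :=
  trimmed_interval_subset_trusted_interval_general n t f m hf hnt hm1 c w hw φ hφinj hφmem hφval
end

section
/- Let n, t, f be integers with 0 ≤ f ≤ t and 3t < n, and let c₁,…,c_{n−f} be real numbers (the correct values). Let m, m′ be integers with n−t ≤ m ≤ n and n−t ≤ m′ ≤ n, let w₁ ≤ … ≤ w_m be a sorted list of m real numbers containing all of c₁,…,c_{n−f} (with multiplicity), and let w′₁ ≤ … ≤ w′_{m′} be a sorted list of m′ real numbers containing all of c₁,…,c_{n−f} (with multiplicity). Then | (w_{m−(n−t)+1} + w_{n−t})/2 − (w′_{m′−(n−t)+1} + w′_{n−t})/2 | ≤ (max_i c_i − min_i c_i)/2; that is, the midpoints of the two trimmed intervals differ by at most half the range of the correct values. -/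
/-!
The values below the lower trimmed endpoint `w_{m-(n-t)+1}` of one list occupy its first
`m - (n - t) ≤ t` positions, and the values above the upper endpoint `w′_{n-t}` of the other list
its last `m′ - (n - t) ≤ t` positions. There are `n - f > 2t` correct values, so one of them lies
in neither group, whence `w_{m-(n-t)+1} ≤ w′_{n-t}`; symmetrically `w′_{m′-(n-t)+1} ≤ w_{n-t}`.
Both trimmed intervals also lie within `[min c, max c]`, and the difference of the midpoints is
`((w_{m-(n-t)+1} - w′_{n-t}) + (w_{n-t} - w′_{m′-(n-t)+1})) / 2 ≤ (0 + (max c - min c)) / 2`.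
-/

open Finset

variable {ι α : Type*} [Fintype ι] [LinearOrder α]

structure SortedContains (m : ℕ) (w : ℕ → α) (c : ι → α) : Prop where
  monotoneOn : MonotoneOn w (Set.Icc 1 m)
  exists_injective :
    ∃ φ : ι → ℕ, Function.Injective φ ∧ ∀ i, φ i ∈ Set.Icc 1 m ∧ w (φ i) = c i

namespace SortedContains

variable {m m' k k' : ℕ} {w w' : ℕ → α} {c : ι → α}

theorem card_below_le (h : SortedContains m w c) (hk : 1 ≤ k) : #{i | c i < w k} ≤ k - 1 := by
  obtain ⟨φ, hφ, hφmem⟩ := h.exists_injective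
  calc #{i | c i < w k} ≤ #(Ico 1 k) := by
        refine card_le_card_of_injOn φ (fun i hi => ?_) hφ.injOn
        obtain ⟨⟨hφ1, hφm⟩, hφc⟩ := hφmem i
        refine mem_Ico.2 ⟨hφ1, lt_of_not_ge fun hkφ => ?_⟩
        have : w k ≤ c i := hφc ▸ h.monotoneOn ⟨hk, hkφ.trans hφm⟩ ⟨hφ1, hφm⟩ hkφ
        exact (mem_filter.1 hi).2.not_ge this
    _ = k - 1 := Nat.card_Ico 1 k

theorem card_above_le (h : SortedContains m w c) (hk : k ≤ m) : #{i | w k < c i} ≤ m - k := by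
  obtain ⟨φ, hφ, hφmem⟩ := h.exists_injective
  calc #{i | w k < c i} ≤ #(Ioc k m) := by
        refine card_le_card_of_injOn φ (fun i hi => ?_) hφ.injOn
        obtain ⟨⟨hφ1, hφm⟩, hφc⟩ := hφmem i
        refine mem_Ioc.2 ⟨lt_of_not_ge fun hφk => ?_, hφm⟩
        have : c i ≤ w k := hφc ▸ h.monotoneOn ⟨hφ1, hφm⟩ ⟨hφ1.trans hφk, hk⟩ hφk
        exact (mem_filter.1 hi).2.not_ge this
    _ = m - k := Nat.card_Ioc k m

theorem exists_le_of_lt_card (h : SortedContains m w c) (hk : k ≤ m)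
    (hcard : m - k < Fintype.card ι) : ∃ i, c i ≤ w k := by
  obtain ⟨i, -, hi⟩ := exists_mem_notMem_of_card_lt_card
    ((h.card_above_le hk).trans_lt (by rwa [card_univ]))
  exact ⟨i, not_lt.1 fun hlt => hi (mem_filter.2 ⟨mem_univ i, hlt⟩)⟩

theorem exists_ge_of_le_card (h : SortedContains m w c) (hk : 1 ≤ k)
    (hcard : k ≤ Fintype.card ι) : ∃ i, w k ≤ c i := by
  obtain ⟨i, -, hi⟩ := exists_mem_notMem_of_card_lt_card
    ((h.card_below_le hk).trans_lt (by rw [card_univ]; omega))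
  exact ⟨i, not_lt.1 fun hlt => hi (mem_filter.2 ⟨mem_univ i, hlt⟩)⟩

theorem le_of_lt_card (h : SortedContains m w c) (h' : SortedContains m' w' c) (hk : 1 ≤ k)
    (hk' : k' ≤ m') (hcard : k - 1 + (m' - k') < Fintype.card ι) : w k ≤ w' k' := by
  by_contra! hlt
  classical
  have hcover : univ ⊆ ({i | c i < w k} : Finset ι) ∪ ({i | w' k' < c i} : Finset ι) :=
    fun i _ => by
      simpa only [mem_union, mem_filter, mem_univ, true_and] using
        (lt_or_ge (c i) (w k)).imp_right hlt.trans_le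
  have hunion := (card_le_card hcover).trans (card_union_le _ _)
  rw [card_univ] at hunion
  have hbelow := h.card_below_le hk
  have habove := h'.card_above_le hk'
  omega

end SortedContains

/-- Midpoint contraction: if two sorted lists `w₁ ≤ … ≤ w_m` and `w′₁ ≤ … ≤ w′_{m′}`
(with `n - t ≤ m, m′ ≤ n` and `3t < n`) each contain all `n - f` correct values
`c₁, …, c_{n-f}` with multiplicity, then the midpoints of the two trimmed intervals differ
by at most half the range of the correct values. -/
theorem trimmed_midpoints_close (n t f m m' : ℕ) (hf : f ≤ t) (ht : 3 * t < n)
    (hm1 : n - t ≤ m) (hm2 : m ≤ n) (hm'1 : n - t ≤ m') (hm'2 : m' ≤ n)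
    (c : Fin (n - f) → ℝ) (w w' : ℕ → ℝ)
    (hw : ∀ i j, 1 ≤ i → i ≤ j → j ≤ m → w i ≤ w j)
    (hw' : ∀ i j, 1 ≤ i → i ≤ j → j ≤ m' → w' i ≤ w' j)
    (φ : Fin (n - f) → ℕ) (hφinj : Function.Injective φ)
    (hφmem : ∀ i, 1 ≤ φ i ∧ φ i ≤ m) (hφval : ∀ i, w (φ i) = c i)
    (ψ : Fin (n - f) → ℕ) (hψinj : Function.Injective ψ)
    (hψmem : ∀ i, 1 ≤ ψ i ∧ ψ i ≤ m') (hψval : ∀ i, w' (ψ i) = c i) :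
    |(w (m - (n - t) + 1) + w (n - t)) / 2 - (w' (m' - (n - t) + 1) + w' (n - t)) / 2|
      ≤ ((⨆ i, c i) - ⨅ i, c i) / 2 := by
  have hW : SortedContains m w c :=
    ⟨fun i hi j hj hij => hw i j hi.1 hij hj.2, φ, hφinj, fun i => ⟨hφmem i, hφval i⟩⟩
  have hW' : SortedContains m' w' c :=
    ⟨fun i hi j hj hij => hw' i j hi.1 hij hj.2, ψ, hψinj, fun i => ⟨hψmem i, hψval i⟩⟩
  have hcard : Fintype.card (Fin (n - f)) = n - f := Fintype.card_fin _
  have inf_le {v : ℕ → ℝ} {k : ℕ} (hv : ∃ i, c i ≤ v k) : ⨅ i, c i ≤ v k :=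
    let ⟨i, hi⟩ := hv; (ciInf_le (Set.finite_range c).bddBelow i).trans hi
  have le_sup {v : ℕ → ℝ} {k : ℕ} (hv : ∃ i, v k ≤ c i) : v k ≤ ⨆ i, c i :=
    let ⟨i, hi⟩ := hv; hi.trans (le_ciSup (Set.finite_range c).bddAbove i)
  have hlo := inf_le (hW.exists_le_of_lt_card (k := m - (n - t) + 1) (by omega) (by omega))
  have hlo' := inf_le (hW'.exists_le_of_lt_card (k := m' - (n - t) + 1) (by omega) (by omega))
  have hhi := le_sup (hW.exists_ge_of_le_card (k := n - t) (by omega) (by omega))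
  have hhi' := le_sup (hW'.exists_ge_of_le_card (k := n - t) (by omega) (by omega))
  have hcross := hW.le_of_lt_card hW' (k := m - (n - t) + 1) (k' := n - t) (by omega) hm'1
    (by omega)
  have hcross' := hW'.le_of_lt_card hW (k := m' - (n - t) + 1) (k' := n - t) (by omega) hm1
    (by omega)
  rw [abs_sub_le_iff]
  constructor <;> linarith
end

section
/- Let d ≥ 1 and t ≥ 1 be integers, let x > 0 and δ > 0 be reals, and let n = (d+1)t+1. Let e₁,…,e_d denote the standard basis of ℝ^d, and let v₁,…,vₙ ∈ ℝ^d be such that exactly t+1 of the indices have v_i = 0 and, for each j ∈ {1,…,d}, exactly t of the indices have v_i = x·e₁ + δ·e_j. Then ⋂_{I ⊆ {1,…,n}, |I| = n−t} conv{ v_i : i ∈ I } = {0}, where conv denotes the convex hull. -/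
/-!
Any `n - t` indices include one of the `t + 1` indices with `v i = 0`, so `0` lies in every hull.
Conversely, the `t + 1 + d t = n` indices with `v i = 0` or `v i = w j := x e₁ + δ e_j` are all
of them, so discarding the `t` indices with `v i = w j` leaves points of `span {w k | k ≠ j}`.
The `w j` are linearly independent (as `δ ≠ 0` and `δ + x ≠ 0`), so these `d` spans meet only in `0`.
-/

open Finset Submodule

theorem Finset.mem_of_sum_ncard_fiber_eq_card {ι α : Type*} [Fintype ι] [DecidableEq α]
    (f : ι → α) (T : Finset α) (hT : ∑ a ∈ T, {i | f i = a}.ncard = Fintype.card ι) (i : ι) :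
    f i ∈ T := by
  classical
  simp_rw [Set.ncard_eq_toFinset_card', Set.toFinset_ofPred, sum_card_fiberwise_eq_card_filter,
    ← card_univ, card_filter_eq_iff] at hT
  exact hT i (mem_univ i)

theorem mem_convexHull_image_of_card_lt {ι E : Type*} [Fintype ι] [AddCommGroup E] [Module ℝ E]
    (v : ι → E) (p : E) (I : Finset ι) (hI : Fintype.card ι < I.card + {i | v i = p}.ncard) :
    p ∈ convexHull ℝ (v '' I) := by
  classical
  rw [Set.ncard_eq_toFinset_card', Set.toFinset_ofPred] at hI
  obtain ⟨i, hi⟩ := inter_nonempty_of_card_lt_card_add_card (subset_univ I) (subset_univ _) hI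
  obtain ⟨hiI, hvi⟩ := mem_inter.1 hi
  exact subset_convexHull ℝ _ ⟨i, hiI, (mem_filter.1 hvi).2⟩

theorem LinearIndependent.eq_zero_of_forall_mem_span_image_compl {κ R M : Type*} [Nonempty κ]
    [Ring R] [AddCommGroup M] [Module R M] {w : κ → M} (hw : LinearIndependent R w) {p : M}
    (hp : ∀ j, p ∈ span R (w '' {j}ᶜ)) : p = 0 := by
  choose c hc hcp using fun j => (Finsupp.mem_span_image_iff_linearCombination R).1 (hp j)
  obtain ⟨j₀⟩ := ‹Nonempty κ›
  have hc_eq : ∀ j, c j = c j₀ := fun j => hw ((hcp j).trans (hcp j₀).symm)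
  have : c j₀ = 0 := Finsupp.ext fun j => by
    rw [← hc_eq j]
    exact Finsupp.notMem_support_iff.1 fun h => hc j h rfl
  rw [← hcp j₀, this, map_zero]

theorem EuclideanSpace.linearIndependent_add_single {𝕜 ι : Type*} [RCLike 𝕜] [Fintype ι]
    [DecidableEq ι] (a : EuclideanSpace 𝕜 ι) {δ : 𝕜} (hδ : δ ≠ 0) (ha : δ + ∑ i, a i ≠ 0) :
    LinearIndependent 𝕜 fun j => a + EuclideanSpace.single j δ := by
  rw [Fintype.linearIndependent_iff]
  intro c hc
  have hcoord : ∀ i, (∑ j, c j) * a i + c i * δ = 0 := by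
    intro i
    have := congrArg (fun q : EuclideanSpace 𝕜 ι => q i) hc
    simpa [Finset.sum_add_distrib, Pi.single_apply, ← Finset.sum_mul] using this
  have hsum : ∑ j, c j = 0 := by
    have := Finset.sum_eq_zero (s := univ) fun i _ => hcoord i
    rw [Finset.sum_add_distrib, ← Finset.mul_sum, ← Finset.sum_mul] at this
    have : (∑ j, c j) * (δ + ∑ i, a i) = 0 := by linear_combination this
    exact (mul_eq_zero.1 this).resolve_right ha
  intro i
  simpa [hsum, hδ] using hcoord i

theorem safeArea_eq_singleton_zero_general (d t : ℕ) (hd : 0 < d)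
    (x δ : ℝ) (hx : 0 < x) (hδ : 0 < δ) (n : ℕ) (hn : n = (d + 1) * t + 1)
    (v : Fin n → EuclideanSpace ℝ (Fin d))
    (h0 : {i : Fin n | v i = 0}.ncard = t + 1)
    (hj : ∀ j : Fin d,
      {i : Fin n | v i = EuclideanSpace.single (⟨0, hd⟩ : Fin d) x +
        EuclideanSpace.single j δ}.ncard = t) :
    (⋂ (I : Finset (Fin n)) (_ : I.card = n - t), convexHull ℝ (v '' ↑I)) = {0} := by
  classical
  have : Nonempty (Fin d) := ⟨⟨0, hd⟩⟩
  set w : Fin d → EuclideanSpace ℝ (Fin d) :=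
    fun j => EuclideanSpace.single ⟨0, hd⟩ x + EuclideanSpace.single j δ
  have hw : LinearIndependent ℝ w :=
    EuclideanSpace.linearIndependent_add_single _ hδ.ne' <| by
      simp only [PiLp.single_apply, sum_ite_eq', mem_univ, ↓reduceIte]
      linarith
  have hv : ∀ i, v i ∈ insert 0 (univ.image w) := by
    refine mem_of_sum_ncard_fiber_eq_card v _ ?_
    rw [sum_insert (by simpa using hw.ne_zero), sum_image hw.injective.injOn, h0]
    simp only [w, hj, sum_const, card_univ, Fintype.card_fin, smul_eq_mul, hn]
    ring
  ext p
  refine ⟨fun hp => ?_, ?_⟩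
  · refine Set.mem_singleton_iff.2 (hw.eq_zero_of_forall_mem_span_image_compl fun j => ?_)
    have hcard : (univ.filter (v · = w j))ᶜ.card = n - t := by
      rw [card_compl, Fintype.card_fin, ← hj j, Set.ncard_eq_toFinset_card', Set.toFinset_ofPred]
    refine convexHull_min ?_ (span ℝ _).convex (Set.mem_iInter₂.1 hp _ hcard)
    rintro _ ⟨i, hi, rfl⟩
    rcases mem_insert.1 (hv i) with h | h
    · rw [h]; exact zero_mem _
    · obtain ⟨k, -, hk⟩ := mem_image.1 h
      have hkj : k ≠ j := by rintro rfl; simp [← hk] at hi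
      exact hk ▸ subset_span ⟨k, hkj, rfl⟩
  · rintro rfl
    refine Set.mem_iInter₂.2 fun I hI => mem_convexHull_image_of_card_lt v 0 I ?_
    rw [Fintype.card_fin, hI, h0]
    have : t ≤ n := by rw [hn]; nlinarith
    omega

/-- The lower-bound construction: with `n = (d+1)t + 1` vectors in `ℝ^d`, of which exactly
`t+1` equal `0` and, for each `j`, exactly `t` equal `x·e₁ + δ·e_j`, the intersection over
all `(n-t)`-element index sets `I` of the convex hulls of `{v_i : i ∈ I}` (the SafeArea)
is exactly `{0}`. -/
theorem safeArea_eq_singleton_zero (d t : ℕ) (hd : 0 < d) (ht : 1 ≤ t)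
    (x δ : ℝ) (hx : 0 < x) (hδ : 0 < δ) (n : ℕ) (hn : n = (d + 1) * t + 1)
    (v : Fin n → EuclideanSpace ℝ (Fin d))
    (h0 : {i : Fin n | v i = 0}.ncard = t + 1)
    (hj : ∀ j : Fin d,
      {i : Fin n | v i = EuclideanSpace.single (⟨0, hd⟩ : Fin d) x +
        EuclideanSpace.single j δ}.ncard = t) :
    (⋂ (I : Finset (Fin n)) (_ : I.card = n - t), convexHull ℝ (v '' ↑I)) = {0} :=
  safeArea_eq_singleton_zero_general d t hd x δ hx hδ n hn v h0 hj
end
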